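/- Let n ≥ 5 and n/2 ≤ ℓ ≤ n − 4. Every connected graph G of order n with Δ(G) = ℓ and sdiam_3(G) ≤ 3 has at least n edges, i.e., G is not a tree. -/

import Mathlib

/-!
A connected graph with fewer than `n` edges is a tree. In a tree, a connected subgraph containing
the ends of a path contains the whole path, so a path `w c x y` together with any fifth vertex `z`
gives a 3-set `{w, y, z}` of Steiner distance at least 4. Such a path exists as soon as a vertex `c`
of maximum degree is not adjacent to every other vertex, which `Δ ≤ n - 4` guarantees.
-/

open SimpleGraph

/-- The Steiner distance of a vertex set `S` in a graph `G`: the minimum number of edges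
of a connected subgraph of `G` whose vertex set contains `S`. -/
noncomputable def steinerDist {V : Type*} (G : SimpleGraph V) (S : Set V) : ℕ :=
  sInf {m : ℕ | ∃ H : G.Subgraph, H.Connected ∧ S ⊆ H.verts ∧ H.edgeSet.ncard = m}

/-- The Steiner `k`-diameter of `G`: the maximum Steiner distance over all `k`-element
vertex subsets. -/
noncomputable def sdiam {V : Type*} [Fintype V] (G : SimpleGraph V) (k : ℕ) : ℕ :=
  sSup {m : ℕ | ∃ S : Finset V, S.card = k ∧ steinerDist G ↑S = m}

/-- The maximum degree of `G`. -/
noncomputable def maxDeg {V : Type*} [Fintype V] (G : SimpleGraph V) : ℕ :=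
  Finset.univ.sup fun v => (G.neighborSet v).ncard

/-- The minimum degree of `G`. -/
noncomputable def minDeg {V : Type*} [Fintype V] (G : SimpleGraph V) : ℕ :=
  sInf {d : ℕ | ∃ v : V, (G.neighborSet v).ncard = d}

/-- `e3 n ℓ d` : minimum number of edges of a graph of order `n` with maximum degree `ℓ`
and Steiner 3-diameter at most `d` (`⊤` if no such graph exists). -/
noncomputable def e3 (n ℓ d : ℕ) : ℕ∞ :=
  sInf {m : ℕ∞ | ∃ G : SimpleGraph (Fin n),
    maxDeg G = ℓ ∧ sdiam G 3 ≤ d ∧ (G.edgeSet.ncard : ℕ∞) = m}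

namespace SimpleGraph

variable {V : Type*} {G : SimpleGraph V}

lemma Connected.card_le_ncard_edgeSet_of_not_isAcyclic [Finite V] (hG : G.Connected)
    (hac : ¬ G.IsAcyclic) : Nat.card V ≤ G.edgeSet.ncard := by
  have hle := hG.card_vert_le_card_edgeSet_add_one
  have hne : Nat.card G.edgeSet + 1 ≠ Nat.card V := fun h =>
    hac (isTree_iff_connected_and_card.mpr ⟨hG, h⟩).isAcyclic
  rw [Nat.card_coe_set_eq] at hle hne
  omega

lemma Subgraph.Connected.ncard_verts_le {H : G.Subgraph} (hH : H.Connected) :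
    H.verts.ncard ≤ H.edgeSet.ncard + 1 := by
  have h := hH.coe.card_vert_le_card_edgeSet_add_one
  rw [← H.image_coe_edgeSet_coe,
    Set.ncard_image_of_injective _ (Sym2.map.injective Subtype.val_injective)]
  rwa [Nat.card_coe_set_eq, Nat.card_coe_set_eq] at h

lemma IsAcyclic.support_subset_verts (hG : G.IsAcyclic) {u v : V} {p : G.Walk u v}
    (hp : p.IsPath) {H : G.Subgraph} (hH : H.Connected) (hu : u ∈ H.verts)
    (hv : v ∈ H.verts) {x : V} (hx : x ∈ p.support) : x ∈ H.verts := by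
  classical
  obtain ⟨q⟩ := hH.coe.preconnected ⟨u, hu⟩ ⟨v, hv⟩
  have hq : (q.map H.hom).bypass = p := congrArg Subtype.val <|
    (hG.subsingleton_path u v).elim ⟨_, (q.map H.hom).bypass_isPath⟩ ⟨p, hp⟩
  rw [← hq] at hx
  obtain ⟨y, -, rfl⟩ := List.mem_map.mp
    (Walk.support_map _ q ▸ (q.map H.hom).support_bypass_subset_support hx)
  exact y.2

lemma le_steinerDist {S : Set V} {k : ℕ} (hG : G.Connected)
    (h : ∀ H : G.Subgraph, H.Connected → S ⊆ H.verts → k ≤ H.edgeSet.ncard) :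
    k ≤ steinerDist G S :=
  le_csInf ⟨_, ⊤, ⟨Subgraph.topIso.connected_iff.mpr hG⟩, fun _ _ => trivial, rfl⟩
    (by rintro _ ⟨H, hH, hS, rfl⟩; exact h H hH hS)

lemma steinerDist_le_ncard_edgeSet [Finite V] (S : Set V) :
    steinerDist G S ≤ G.edgeSet.ncard := by
  rcases Set.eq_empty_or_nonempty
    {m | ∃ H : G.Subgraph, H.Connected ∧ S ⊆ H.verts ∧ H.edgeSet.ncard = m} with h | h
  · simp [steinerDist, h]
  · obtain ⟨H, -, -, hH⟩ := Nat.sInf_mem h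
    rw [steinerDist, ← hH]
    exact Set.ncard_le_ncard H.edgeSet_subset

lemma steinerDist_le_sdiam [Fintype V] {S : Finset V} {k : ℕ} (hS : S.card = k) :
    steinerDist G S ≤ sdiam G k :=
  le_csSup ⟨G.edgeSet.ncard, by rintro _ ⟨T, -, rfl⟩; exact steinerDist_le_ncard_edgeSet _⟩
    ⟨S, hS, rfl⟩

lemma IsAcyclic.length_add_one_le_steinerDist [Finite V] (hG : G.IsAcyclic)
    (hconn : G.Connected) {u v z : V} {p : G.Walk u v} (hp : p.IsPath) (hz : z ∉ p.support) :
    p.length + 1 ≤ steinerDist G {u, v, z} := by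
  classical
  refine le_steinerDist hconn fun H hH hS => ?_
  have hsub : (↑(insert z p.support.toFinset) : Set V) ⊆ H.verts := by
    intro x hx
    rcases Finset.mem_insert.mp hx with rfl | hx
    · exact hS (by simp)
    · exact hG.support_subset_verts hp hH (hS (by simp)) (hS (by simp)) (List.mem_toFinset.mp hx)
  have hcard : (insert z p.support.toFinset).card = p.length + 2 := by
    rw [Finset.card_insert_of_notMem (by simpa using hz),
      List.toFinset_card_of_nodup hp.support_nodup, Walk.length_support]
  have := Set.ncard_le_ncard hsub
  rw [Set.ncard_coe_finset, hcard] at this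
  have := hH.ncard_verts_le
  omega

lemma IsAcyclic.length_add_one_le_sdiam_three [Fintype V] (hG : G.IsAcyclic)
    (hconn : G.Connected) {u v : V} {p : G.Walk u v} (hp : p.IsPath) (huv : u ≠ v)
    (hlen : p.length + 2 ≤ Fintype.card V) : p.length + 1 ≤ sdiam G 3 := by
  classical
  obtain ⟨z, -, hz⟩ := Finset.exists_mem_notMem_of_card_lt_card
    (s := p.support.toFinset) (t := Finset.univ) (by
      rw [Finset.card_univ, List.toFinset_card_of_nodup hp.support_nodup, Walk.length_support]
      omega)
  have hz : z ∉ p.support := by simpa using hz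
  have hS : ({u, v, z} : Finset V).card = 3 := Finset.card_eq_three.mpr
    ⟨u, v, z, huv, fun h => hz (h ▸ p.start_mem_support), fun h => hz (h ▸ p.end_mem_support),
      rfl⟩
  calc p.length + 1 ≤ steinerDist G {u, v, z} := hG.length_add_one_le_steinerDist hconn hp hz
    _ = steinerDist G ↑({u, v, z} : Finset V) := by push_cast; rfl
    _ ≤ sdiam G 3 := steinerDist_le_sdiam hS

/-- Some edge `x y` leaves the closed neighbourhood of `c`, with `x` a neighbour of `c`. Then `x`
has degree at least two, hence so has `c`, and a second neighbour `w` of `c` gives the path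
`w c x y`. -/
lemma exists_isPath_length_three [Finite V] (hconn : G.Connected) {c u : V}
    (hc : ∀ v, (G.neighborSet v).ncard ≤ (G.neighborSet c).ncard)
    (hu : u ∉ insert c (G.neighborSet c)) :
    ∃ (w y : V) (p : G.Walk w y), p.IsPath ∧ p.length = 3 ∧ w ≠ y := by
  obtain ⟨q⟩ := hconn c u
  obtain ⟨⟨⟨x, y⟩, hxy⟩, -, hx, hy⟩ := q.exists_boundary_dart _ (Set.mem_insert c _) hu
  simp only [Set.mem_insert_iff, mem_neighborSet, not_or] at hx hy
  obtain ⟨hyc, hcy⟩ := hy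
  have hcx : G.Adj c x := hx.resolve_left (by rintro rfl; exact hcy hxy)
  have hdeg : 1 < (G.neighborSet c).ncard :=
    calc 1 < ({c, y} : Set V).ncard := by rw [Set.ncard_pair (Ne.symm hyc)]; omega
      _ ≤ (G.neighborSet x).ncard := Set.ncard_le_ncard (by
          rintro _ (rfl | rfl)
          exacts [hcx.symm, hxy])
      _ ≤ _ := hc x
  obtain ⟨w, hcw, hwx⟩ := Set.exists_ne_of_one_lt_ncard hdeg x
  have hwy : w ≠ y := by rintro rfl; exact hcy hcw
  refine ⟨w, y, .cons hcw.symm (.cons hcx (.cons hxy .nil)), ?_, rfl, hwy⟩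
  simp [Walk.isPath_def, hwx, hwy, G.ne_of_adj hcx, G.ne_of_adj hxy, (G.ne_of_adj hcw).symm,
    Ne.symm hyc]

lemma exists_ncard_neighborSet_eq_maxDeg [Fintype V] [Nonempty V] (G : SimpleGraph V) :
    ∃ c, (G.neighborSet c).ncard = maxDeg G :=
  let ⟨c, _, hc⟩ := Finset.exists_mem_eq_sup _ Finset.univ_nonempty
    fun v => (G.neighborSet v).ncard
  ⟨c, hc.symm⟩

lemma ncard_neighborSet_le_maxDeg [Fintype V] (v : V) : (G.neighborSet v).ncard ≤ maxDeg G :=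
  Finset.le_sup (f := fun v => (G.neighborSet v).ncard) (Finset.mem_univ v)

lemma exists_notMem_insert_neighborSet [Fintype V] {c : V}
    (h : (G.neighborSet c).ncard + 2 ≤ Fintype.card V) :
    ∃ u, u ∉ insert c (G.neighborSet c) := by
  by_contra! hall
  have := Set.ncard_insert_le c (G.neighborSet c)
  rw [Set.eq_univ_of_forall hall, Set.ncard_univ, Nat.card_eq_fintype_card] at this
  omega

end SimpleGraph

theorem stmt15_general (n ℓ : ℕ) (hn : 5 ≤ n) (hl2 : ℓ ≤ n - 4)
    {V : Type*} [Fintype V] (hcard : Fintype.card V = n)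
    (G : SimpleGraph V) (hconn : G.Connected) (hmax : maxDeg G = ℓ)
    (hsd : sdiam G 3 ≤ 3) :
    n ≤ G.edgeSet.ncard := by
  by_contra! hE
  have hac : G.IsAcyclic := by
    by_contra hac
    have := hconn.card_le_ncard_edgeSet_of_not_isAcyclic hac
    rw [Nat.card_eq_fintype_card] at this
    omega
  have : Nonempty V := hconn.nonempty
  obtain ⟨c, hc⟩ := G.exists_ncard_neighborSet_eq_maxDeg
  obtain ⟨u, hu⟩ : ∃ u, u ∉ insert c (G.neighborSet c) :=
    exists_notMem_insert_neighborSet (by omega)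
  obtain ⟨w, y, p, hp, hlen, hwy⟩ := exists_isPath_length_three hconn
    (fun v => hc ▸ ncard_neighborSet_le_maxDeg v) hu
  have := hac.length_add_one_le_sdiam_three hconn hp hwy (by omega)
  omega

theorem stmt15 (n ℓ : ℕ) (hn : 5 ≤ n) (hl1 : n ≤ 2 * ℓ) (hl2 : ℓ ≤ n - 4)
    {V : Type*} [Fintype V] (hcard : Fintype.card V = n)
    (G : SimpleGraph V) (hconn : G.Connected) (hmax : maxDeg G = ℓ)
    (hsd : sdiam G 3 ≤ 3) :
    n ≤ G.edgeSet.ncard :=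
  stmt15_general n ℓ hn hl2 hcard G hconn hmax hsd
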